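/- If X ∼ BSN(λ, a, b), then for every real t the moment generating function satisfies M_X(t) = E[e^{tX}] = (2 / B(a,b)) e^{t²/2} ∫_{−∞}^{∞} Φ(z; λ)^{a−1} (1 − Φ(z; λ))^{b−1} Φ(λz) φ(z − t) dz, i.e. M_X(t) equals (2/B(a,b)) e^{t²/2} times the expectation of Φ(Z;λ)^{a−1}(1−Φ(Z;λ))^{b−1}Φ(λZ) where Z is normal with mean t and variance 1. -/
import Mathlib


open MeasureTheory

/-- Standard normal density. -/
noncomputable def normPdf (x : ℝ) : ℝ := Real.exp (-x ^ 2 / 2) / Real.sqrt (2 * Real.pi)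

/-- Standard normal cdf. -/
noncomputable def normCdf (x : ℝ) : ℝ := ∫ t in Set.Iic x, normPdf t

/-- Skew-normal cdf with parameter `l`. -/
noncomputable def snCdf (l z : ℝ) : ℝ := ∫ t in Set.Iic z, 2 * normPdf t * normCdf (l * t)

/-- The Beta function. -/
noncomputable def betaFn (a b : ℝ) : ℝ := Real.Gamma a * Real.Gamma b / Real.Gamma (a + b)

/-- The Beta skew-normal density with parameters `l`, `a`, `b`. -/
noncomputable def bsnPdf (l a b x : ℝ) : ℝ :=
  (2 / betaFn a b) * snCdf l x ^ (a - 1) * (1 - snCdf l x) ^ (b - 1) * normPdf x *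
    normCdf (l * x)

/-- The Beta skew-normal measure `BSN(l, a, b)`. -/
noncomputable def bsnMeasure (l a b : ℝ) : Measure ℝ :=
  volume.withDensity fun x => ENNReal.ofReal (bsnPdf l a b x)

lemma normPdf_nonneg (x : ℝ) : 0 ≤ normPdf x := by
  unfold normPdf; positivity

lemma integrable_normPdf : Integrable normPdf := by
  have h := integrable_exp_neg_mul_sq (by norm_num : (0:ℝ) < 1/2)
  have : normPdf = fun x => Real.exp (-(1/2) * x ^ 2) * (Real.sqrt (2 * Real.pi))⁻¹ := by
    funext x; unfold normPdf; rw [div_eq_mul_inv]; ring_nf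
  rw [this]
  exact h.mul_const _

lemma monotone_normCdf : Monotone normCdf := by
  intro x y hxy
  exact setIntegral_mono_set (integrable_normPdf.integrableOn)
    (Filter.Eventually.of_forall normPdf_nonneg)
    (HasSubset.Subset.eventuallyLE (Set.Iic_subset_Iic.mpr hxy))

lemma normCdf_nonneg (x : ℝ) : 0 ≤ normCdf x :=
  setIntegral_nonneg measurableSet_Iic fun t _ => normPdf_nonneg t

lemma normCdf_le (x : ℝ) : normCdf x ≤ ∫ t, normPdf t :=
  setIntegral_le_integral integrable_normPdf (Filter.Eventually.of_forall normPdf_nonneg)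

lemma integrable_snIntegrand (l : ℝ) :
    Integrable (fun t => 2 * normPdf t * normCdf (l * t)) := by
  set C := ∫ t, normPdf t with hC
  refine Integrable.mono' ((integrable_normPdf.const_mul 2).mul_const C) ?_ ?_
  · have h1 : Measurable normPdf := by
      unfold normPdf; fun_prop
    exact ((h1.const_mul 2).mul ((monotone_normCdf.measurable).comp (measurable_const_mul l))).aestronglyMeasurable
  · refine Filter.Eventually.of_forall fun x => ?_
    rw [Real.norm_eq_abs, abs_of_nonneg (mul_nonneg (mul_nonneg (by norm_num)
      (normPdf_nonneg x)) (normCdf_nonneg _))]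
    exact mul_le_mul_of_nonneg_left (normCdf_le _)
      (mul_nonneg (by norm_num) (normPdf_nonneg x))


lemma measurable_normPdf : Measurable normPdf := by unfold normPdf; fun_prop

lemma snIntegrand_nonneg (l t : ℝ) : 0 ≤ 2 * normPdf t * normCdf (l * t) :=
  mul_nonneg (mul_nonneg (by norm_num) (normPdf_nonneg t)) (normCdf_nonneg _)

lemma monotone_snCdf (l : ℝ) : Monotone (snCdf l) := by
  intro x y hxy
  exact setIntegral_mono_set ((integrable_snIntegrand l).integrableOn)
    (Filter.Eventually.of_forall (snIntegrand_nonneg l))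
    (HasSubset.Subset.eventuallyLE (Set.Iic_subset_Iic.mpr hxy))

lemma measurable_bsnPdf (l a b : ℝ) : Measurable (bsnPdf l a b) := by
  unfold bsnPdf
  have h1 : Measurable (snCdf l) := (monotone_snCdf l).measurable
  have h2 : Measurable normCdf := monotone_normCdf.measurable
  have h3 := measurable_normPdf
  fun_prop

lemma normPdf_mul_exp (t x : ℝ) :
    normPdf x * Real.exp (t * x) = Real.exp (t ^ 2 / 2) * normPdf (x - t) := by
  unfold normPdf
  rw [div_mul_eq_mul_div, ← mul_div_assoc, ← Real.exp_add, ← Real.exp_add]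
  congr 2
  ring

/-- Moment generating function of `X ∼ BSN(l, a, b)`:
`M_X(t) = (2/B(a,b)) e^{t²/2} E[Φ(Z;l)^{a-1} (1-Φ(Z;l))^{b-1} Φ(l Z)]` where
`Z ∼ N(t, 1)` (density `z ↦ φ(z - t)`). -/
theorem bsn_mgf {Ω : Type*} [MeasurableSpace Ω] (μ : Measure Ω) (X : Ω → ℝ)
    (hX : Measurable X) (l a b : ℝ) (ha : 0 < a) (hb : 0 < b)
    (hlaw : Measure.map X μ = bsnMeasure l a b) (t : ℝ) :
    ∫⁻ ω, ENNReal.ofReal (Real.exp (t * X ω)) ∂μ =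
      ENNReal.ofReal (2 / betaFn a b * Real.exp (t ^ 2 / 2)) *
        ∫⁻ z : ℝ, ENNReal.ofReal
          (snCdf l z ^ (a - 1) * (1 - snCdf l z) ^ (b - 1) * normCdf (l * z) *
            normPdf (z - t)) := by
  have hB : 0 < betaFn a b := by
    unfold betaFn
    have := Real.Gamma_pos_of_pos ha
    have := Real.Gamma_pos_of_pos hb
    have := Real.Gamma_pos_of_pos (add_pos ha hb)
    positivity
  have hc : 0 ≤ 2 / betaFn a b * Real.exp (t ^ 2 / 2) := by positivity
  have hmexp : Measurable fun x : ℝ => ENNReal.ofReal (Real.exp (t * x)) := by fun_prop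
  calc ∫⁻ ω, ENNReal.ofReal (Real.exp (t * X ω)) ∂μ
      = ∫⁻ x, ENNReal.ofReal (Real.exp (t * x)) ∂(Measure.map X μ) :=
        (lintegral_map hmexp hX).symm
    _ = ∫⁻ x, ENNReal.ofReal (bsnPdf l a b x) * ENNReal.ofReal (Real.exp (t * x)) := by
        rw [hlaw, bsnMeasure,
          lintegral_withDensity_eq_lintegral_mul _ (measurable_bsnPdf l a b).ennreal_ofReal hmexp]
        rfl
    _ = ∫⁻ x, ENNReal.ofReal (2 / betaFn a b * Real.exp (t ^ 2 / 2)) *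
          ENNReal.ofReal (snCdf l x ^ (a - 1) * (1 - snCdf l x) ^ (b - 1) * normCdf (l * x) *
            normPdf (x - t)) := by
        congr 1; funext x
        rw [← ENNReal.ofReal_mul' (Real.exp_nonneg _), ← ENNReal.ofReal_mul hc]
        congr 1
        unfold bsnPdf
        have h := normPdf_mul_exp t x
        linear_combination (2 / betaFn a b * snCdf l x ^ (a - 1) * (1 - snCdf l x) ^ (b - 1) *
          normCdf (l * x)) * h
    _ = _ := lintegral_const_mul' _ _ ENNReal.ofReal_ne_top
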